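/- arXiv:1302.3201 — 2 statements merged into one kernel-verified Lean document; each statement's English description precedes it below -/
import Mathlib

section
/- If M is a maximal ideal of Lmc(S), then E(M) is an e-ultrafilter (a maximal e-filter); conversely, if 𝒜 is an e-ultrafilter, then E⁻(𝒜) is a maximal ideal of Lmc(S). The map M ↦ E(M) is a bijection between maximal ideals of Lmc(S) and e-ultrafilters. -/
open scoped BoundedContinuousFunction
open WeakDual

/-- A semitopological semigroup: multiplication is separately continuous. -/
class SemitopologicalSemigroup (S : Type*) [TopologicalSpace S] [Mul S] : Prop where
  continuous_mul_left : ∀ s : S, Continuous fun x : S => s * x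
  continuous_mul_right : ∀ s : S, Continuous fun x : S => x * s

/-- Left translate `L_s f (x) = f (s x)` as a bounded continuous function. -/
noncomputable def lTrans {S : Type*} [TopologicalSpace S] [Mul S] [SemitopologicalSemigroup S]
    (s : S) (f : S →ᵇ ℂ) : S →ᵇ ℂ :=
  f.compContinuous ⟨fun x => s * x, SemitopologicalSemigroup.continuous_mul_left s⟩

/-- The left multiplicatively continuous functions: `f ∈ Lmc S` iff `T_μ f` is (bounded)
continuous for every character `μ` of `CB(S) = S →ᵇ ℂ` (i.e. every `μ ∈ βS`). -/
def Lmc (S : Type*) [TopologicalSpace S] [Mul S] [SemitopologicalSemigroup S] :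
    Set (S →ᵇ ℂ) :=
  {f | ∀ μ : characterSpace ℂ (S →ᵇ ℂ), Continuous fun s : S => (μ (lTrans s f) : ℂ)}

/-- `E_ε(f) = {x ∈ S : |f x| ≤ ε}`. -/
def Eset {S : Type*} [TopologicalSpace S] (ε : ℝ) (f : S →ᵇ ℂ) : Set S :=
  {x : S | ‖f x‖ ≤ ε}

/-- A zero set of `Lmc S`: `Z(f) = f⁻¹({0})` for some `f ∈ Lmc S`. -/
def IsZeroSet {S : Type*} [TopologicalSpace S] [Mul S] [SemitopologicalSemigroup S]
    (A : Set S) : Prop :=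
  ∃ f ∈ Lmc S, A = {x : S | f x = 0}

/-- `E(I) = {E_ε(f) : f ∈ I, ε > 0}`. -/
def Efam {S : Type*} [TopologicalSpace S] [Mul S] [SemitopologicalSemigroup S]
    (I : Set (S →ᵇ ℂ)) : Set (Set S) :=
  {A | ∃ f ∈ I, ∃ ε : ℝ, 0 < ε ∧ A = Eset ε f}

/-- `E⁻(𝒜) = {f ∈ Lmc S : E_ε(f) ∈ 𝒜 for all ε > 0}`. -/
def Einv {S : Type*} [TopologicalSpace S] [Mul S] [SemitopologicalSemigroup S]
    (𝒜 : Set (Set S)) : Set (S →ᵇ ℂ) :=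
  {f | f ∈ Lmc S ∧ ∀ ε : ℝ, 0 < ε → Eset ε f ∈ 𝒜}

/-- A `z`-filter on `Lmc S`. -/
structure IsZFilter {S : Type*} [TopologicalSpace S] [Mul S] [SemitopologicalSemigroup S]
    (𝒜 : Set (Set S)) : Prop where
  zero_sets : ∀ A ∈ 𝒜, IsZeroSet A
  not_empty_mem : ∅ ∉ 𝒜
  univ_mem : Set.univ ∈ 𝒜
  inter_mem : ∀ A ∈ 𝒜, ∀ B ∈ 𝒜, A ∩ B ∈ 𝒜
  superset_mem : ∀ A ∈ 𝒜, ∀ B : Set S, IsZeroSet B → A ⊆ B → B ∈ 𝒜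

/-- An ideal of the algebra `Lmc S`. -/
structure IsIdealLmc {S : Type*} [TopologicalSpace S] [Mul S] [SemitopologicalSemigroup S]
    (I : Set (S →ᵇ ℂ)) : Prop where
  subset_lmc : I ⊆ Lmc S
  zero_mem : (0 : S →ᵇ ℂ) ∈ I
  add_mem : ∀ f ∈ I, ∀ g ∈ I, f + g ∈ I
  mul_mem : ∀ f ∈ Lmc S, ∀ g ∈ I, f * g ∈ I

/-- A maximal (proper) ideal of `Lmc S`. -/
def IsMaximalIdealLmc {S : Type*} [TopologicalSpace S] [Mul S] [SemitopologicalSemigroup S]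
    (M : Set (S →ᵇ ℂ)) : Prop :=
  IsIdealLmc M ∧ M ≠ Lmc S ∧ ∀ J, IsIdealLmc J → J ≠ Lmc S → M ⊆ J → J = M

/-- An `e`-filter: a `z`-filter with `E(E⁻(𝒜)) = 𝒜`. -/
def IsEFilter {S : Type*} [TopologicalSpace S] [Mul S] [SemitopologicalSemigroup S]
    (𝒜 : Set (Set S)) : Prop :=
  IsZFilter 𝒜 ∧ Efam (Einv 𝒜) = 𝒜

/-- An `e`-ideal: an ideal with `E⁻(E(I)) = I`. -/
def IsEIdeal {S : Type*} [TopologicalSpace S] [Mul S] [SemitopologicalSemigroup S]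
    (I : Set (S →ᵇ ℂ)) : Prop :=
  IsIdealLmc I ∧ Einv (Efam I) = I

/-- An `e`-ultrafilter: a maximal `e`-filter. -/
def IsEUltrafilter {S : Type*} [TopologicalSpace S] [Mul S] [SemitopologicalSemigroup S]
    (p : Set (Set S)) : Prop :=
  IsEFilter p ∧ ∀ q, IsEFilter q → p ⊆ q → q = p

/-- The sum `p + q` of two families of zero sets: `A ∈ p + q` iff `A = E_ε(f)` for some `ε > 0`,
`f ∈ Lmc S`, with `E_δ(q, f) = {x : λ_x⁻¹(E_δ(f)) ∈ q} ∈ p` for all `δ > 0`. -/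
def eAdd {S : Type*} [TopologicalSpace S] [Mul S] [SemitopologicalSemigroup S]
    (p q : Set (Set S)) : Set (Set S) :=
  {A | ∃ ε : ℝ, 0 < ε ∧ ∃ f ∈ Lmc S, A = Eset ε f ∧
    ∀ δ : ℝ, 0 < δ → {x : S | (fun t => x * t) ⁻¹' Eset δ f ∈ q} ∈ p}

/-- The principal `e`-ultrafilter `e(a) = {E_ε(f) : f ∈ Lmc S, f a = 0, ε > 0}`. -/
def ePrinc {S : Type*} [TopologicalSpace S] [Mul S] [SemitopologicalSemigroup S]
    (a : S) : Set (Set S) :=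
  {A | ∃ f ∈ Lmc S, f a = 0 ∧ ∃ ε : ℝ, 0 < ε ∧ A = Eset ε f}

/-!
Two facts about a maximal ideal `M` carry the argument. `M` is closed, and a closed ideal is stable
under `f ↦ ψ ∘ |f|` for continuous `ψ` with `ψ 0 = 0` (Weierstrass approximation of `ψ ∘ √` by
polynomials in `f * star f`); this realises every zero set containing some `E_ε(f)`, `f ∈ M`, as an
`E`-set of an element of `M`, so `E(M)` is a `z`-filter. And a function in `Lmc S` bounded away
from `0` is invertible in `Lmc S`, because characters commute with inversion; this gives
`E⁻(E(M)) = M`. Maximality then passes back and forth through `E⁻(E(M)) = M` and `E(E⁻(𝒜)) = 𝒜`.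
-/

open scoped Polynomial

lemma Complex.aeval_ofReal (q : ℝ[X]) (r : ℝ) :
    Polynomial.aeval (r : ℂ) q = ((q.eval r : ℝ) : ℂ) :=
  Polynomial.aeval_ofReal q r

namespace BoundedContinuousFunction

variable {α : Type*} [TopologicalSpace α]

lemma mul_star_apply (f : α →ᵇ ℂ) (x : α) : (f * star f) x = ((‖f x‖ ^ 2 : ℝ) : ℂ) := by
  simp [Complex.mul_conj, Complex.normSq_eq_norm_sq]

lemma norm_mul_star_add_mul_star_apply (f g : α →ᵇ ℂ) (x : α) :
    ‖(f * star f + g * star g) x‖ = ‖f x‖ ^ 2 + ‖g x‖ ^ 2 := by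
  rw [add_apply, mul_star_apply, mul_star_apply, ← Complex.ofReal_add,
    Complex.norm_of_nonneg (by positivity)]

lemma aeval_apply (a : α →ᵇ ℂ) (q : ℝ[X]) (x : α) :
    Polynomial.aeval a q x = Polynomial.aeval (a x) q :=
  (Polynomial.aeval_algHom_apply
    ((ContinuousMap.evalAlgHom ℝ ℂ x).comp (toContinuousMapₐ ℝ)) a q).symm

noncomputable def compNorm (ψ : ℝ → ℝ) (hψ : Continuous ψ) (f : α →ᵇ ℂ) : α →ᵇ ℂ where
  toFun x := ψ ‖f x‖
  continuous_toFun := by fun_prop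
  map_bounded' := Metric.isBounded_range_iff.1 <|
    (isCompact_Icc.image (by fun_prop : Continuous fun t => (ψ t : ℂ))).isBounded.subset <| by
      rintro _ ⟨x, rfl⟩
      exact ⟨‖f x‖, ⟨norm_nonneg _, f.norm_coe_le_norm x⟩, rfl⟩

lemma compNorm_apply (ψ : ℝ → ℝ) (hψ : Continuous ψ) (f : α →ᵇ ℂ) (x : α) :
    compNorm ψ hψ f x = ψ ‖f x‖ := rfl

end BoundedContinuousFunction

open BoundedContinuousFunction (mul_star_apply norm_mul_star_add_mul_star_apply aeval_apply compNorm
  compNorm_apply)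

section

variable {S : Type*} [TopologicalSpace S] [Mul S] [SemitopologicalSemigroup S]

noncomputable def lTransStarAlgHom (s : S) : (S →ᵇ ℂ) →⋆ₐ[ℂ] (S →ᵇ ℂ) where
  toFun := lTrans s
  map_one' := rfl
  map_mul' _ _ := rfl
  map_zero' := rfl
  map_add' _ _ := rfl
  commutes' _ := rfl
  map_star' _ := rfl

lemma coe_lTransStarAlgHom (s : S) : ⇑(lTransStarAlgHom s) = lTrans s := rfl

lemma dist_character_lTrans_le (μ : characterSpace ℂ (S →ᵇ ℂ)) (s : S) (f g : S →ᵇ ℂ) :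
    dist (μ (lTrans s f)) (μ (lTrans s g)) ≤ dist f g := by
  rw [dist_eq_norm, dist_eq_norm, ← map_sub, ← coe_lTransStarAlgHom, ← map_sub]
  calc ‖μ (lTransStarAlgHom s (f - g))‖ ≤ ‖lTransStarAlgHom s (f - g)‖ * ‖(1 : S →ᵇ ℂ)‖ :=
        AlgHom.norm_apply_le_self_mul_norm_one μ _
    _ ≤ ‖f - g‖ * 1 := by
        gcongr
        · exact BoundedContinuousFunction.norm_compContinuous_le _ _
        · exact (BoundedContinuousFunction.norm_le zero_le_one).2 fun _ => norm_one.le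
    _ = ‖f - g‖ := mul_one _

namespace Lmc

variable (S) in
noncomputable def starSubalgebra : StarSubalgebra ℂ (S →ᵇ ℂ) where
  carrier := Lmc S
  mul_mem' {f g} hf hg μ := by
    simp only [← coe_lTransStarAlgHom, map_mul]
    exact (hf μ).mul (hg μ)
  add_mem' {f g} hf hg μ := by
    simp only [← coe_lTransStarAlgHom, map_add]
    exact (hf μ).add (hg μ)
  algebraMap_mem' c μ := by
    simpa only [← coe_lTransStarAlgHom, AlgHomClass.commutes] using continuous_const
  star_mem' {f} hf μ := by
    simpa only [← coe_lTransStarAlgHom, map_star] using (hf μ).star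

lemma zero_mem : (0 : S →ᵇ ℂ) ∈ Lmc S := (starSubalgebra S).zero_mem

lemma one_mem : (1 : S →ᵇ ℂ) ∈ Lmc S := (starSubalgebra S).one_mem

lemma add_mem {f g : S →ᵇ ℂ} (hf : f ∈ Lmc S) (hg : g ∈ Lmc S) : f + g ∈ Lmc S :=
  (starSubalgebra S).add_mem hf hg

lemma mul_mem {f g : S →ᵇ ℂ} (hf : f ∈ Lmc S) (hg : g ∈ Lmc S) : f * g ∈ Lmc S :=
  (starSubalgebra S).mul_mem hf hg

lemma star_mem {f : S →ᵇ ℂ} (hf : f ∈ Lmc S) : star f ∈ Lmc S :=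
  StarMemClass.star_mem (s := starSubalgebra S) hf

lemma aeval_mem {a : S →ᵇ ℂ} (ha : a ∈ Lmc S) (q : ℝ[X]) : Polynomial.aeval a q ∈ Lmc S := by
  have : Algebra.adjoin ℝ {a} ≤ (starSubalgebra S).toSubalgebra.restrictScalars ℝ :=
    Algebra.adjoin_le (Set.singleton_subset_iff.2 ha)
  exact this (Polynomial.aeval_mem_adjoin_singleton ℝ a)

theorem isClosed : IsClosed (Lmc S) := by
  refine isClosed_of_closure_subset fun f hf μ => ?_
  refine continuous_of_uniform_approx_of_continuous fun u hu => ?_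
  obtain ⟨ε, hε, hεu⟩ := Metric.mem_uniformity_dist.1 hu
  obtain ⟨g, hg, hfg⟩ := Metric.mem_closure_iff.1 hf ε hε
  exact ⟨_, hg μ, fun s => hεu ((dist_character_lTrans_le μ s f g).trans_lt hfg)⟩

lemma exists_mul_eq_one {f : S →ᵇ ℂ} (hf : f ∈ Lmc S) {c : ℝ} (hc : 0 < c)
    (hfc : ∀ x, c ≤ ‖f x‖) : ∃ g ∈ Lmc S, f * g = 1 := by
  have hf0 : ∀ x, f x ≠ 0 := fun x => norm_pos_iff.1 (hc.trans_le (hfc x))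
  let g := BoundedContinuousFunction.ofNormedAddCommGroup (fun x => (f x)⁻¹)
    (f.continuous.inv₀ hf0) c⁻¹ fun x => by rw [norm_inv]; exact inv_anti₀ hc (hfc x)
  have hfg : f * g = 1 := by ext x; exact mul_inv_cancel₀ (hf0 x)
  refine ⟨g, fun μ => ?_, hfg⟩
  have hμ : ∀ s, μ (lTrans s f) * μ (lTrans s g) = 1 := fun s => by
    rw [← coe_lTransStarAlgHom, ← map_mul, ← map_mul, hfg, map_one, map_one]
  simp only [fun s => eq_inv_of_mul_eq_one_right (hμ s)]
  exact (hf μ).inv₀ fun s => left_ne_zero_of_mul_eq_one (hμ s)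

end Lmc

lemma isIdealLmc_lmc : IsIdealLmc (Lmc S) :=
  ⟨subset_rfl, Lmc.zero_mem, fun _ hf _ hg => Lmc.add_mem hf hg, fun _ hf _ hg => Lmc.mul_mem hf hg⟩

namespace IsIdealLmc

variable {I : Set (S →ᵇ ℂ)}

lemma eq_lmc_of_one_mem (hI : IsIdealLmc I) (h1 : 1 ∈ I) : I = Lmc S :=
  hI.subset_lmc.antisymm fun f hf => by simpa using hI.mul_mem f hf 1 h1

lemma eq_lmc_of_le_norm (hI : IsIdealLmc I) {f : S →ᵇ ℂ} (hf : f ∈ I) {c : ℝ} (hc : 0 < c)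
    (hfc : ∀ x, c ≤ ‖f x‖) : I = Lmc S := by
  obtain ⟨g, hg, hfg⟩ := Lmc.exists_mul_eq_one (hI.subset_lmc hf) hc hfc
  refine hI.eq_lmc_of_one_mem ?_
  simpa [hfg, mul_comm] using hI.mul_mem g hg f hf

lemma mul_star_mem (hI : IsIdealLmc I) {f : S →ᵇ ℂ} (hf : f ∈ I) : f * star f ∈ I := by
  simpa [mul_comm] using hI.mul_mem _ (Lmc.star_mem (hI.subset_lmc hf)) f hf

lemma aeval_mem (hI : IsIdealLmc I) {a : S →ᵇ ℂ} (ha : a ∈ I) {q : ℝ[X]} (hq : q.eval 0 = 0) :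
    Polynomial.aeval a q ∈ I := by
  obtain ⟨r, rfl⟩ := (Polynomial.X_dvd_iff (f := q)).2 (by rwa [Polynomial.coeff_zero_eq_eval_zero])
  rw [map_mul, Polynomial.aeval_X, mul_comm]
  exact hI.mul_mem _ (Lmc.aeval_mem (hI.subset_lmc ha) r) a ha

lemma closure (hI : IsIdealLmc I) : IsIdealLmc (closure I) where
  subset_lmc := Lmc.isClosed.closure_subset_iff.2 hI.subset_lmc
  zero_mem := subset_closure hI.zero_mem
  add_mem _ hf _ hg := map_mem_closure₂ continuous_add hf hg hI.add_mem
  mul_mem f hf _ hg := map_mem_closure (continuous_const_mul f) hg (hI.mul_mem f hf)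

/-- Weierstrass: `ψ ∘ √` is uniformly approximated on `[0, ‖f‖²]` by polynomials vanishing at `0`,
and these, evaluated at `f * star f`, lie in `I`. -/
lemma compNorm_mem (hI : IsIdealLmc I) (hcl : IsClosed I) {f : S →ᵇ ℂ} (hf : f ∈ I)
    {ψ : ℝ → ℝ} (hψ : Continuous ψ) (hψ0 : ψ 0 = 0) : compNorm ψ hψ f ∈ I := by
  rw [← hcl.closure_eq, Metric.mem_closure_iff]
  intro θ hθ
  obtain ⟨p, hp⟩ := exists_polynomial_near_of_continuousOn 0 (‖f‖ ^ 2) (ψ ∘ Real.sqrt)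
    (by fun_prop : Continuous (ψ ∘ Real.sqrt)).continuousOn (θ / 4) (by positivity)
  let q := p - Polynomial.C (p.eval 0)
  refine ⟨Polynomial.aeval (f * star f) q, hI.aeval_mem (hI.mul_star_mem hf) (by simp [q]), ?_⟩
  refine lt_of_le_of_lt ((BoundedContinuousFunction.dist_le (by positivity)).2 fun x => ?_)
    (half_lt_self hθ)
  have h0 := hp 0 ⟨le_rfl, by positivity⟩
  have hx := hp (‖f x‖ ^ 2) ⟨by positivity, by gcongr; exact f.norm_coe_le_norm x⟩
  simp only [Function.comp, Real.sqrt_zero, hψ0, Real.sqrt_sq (norm_nonneg _)] at h0 hx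
  rw [compNorm_apply, aeval_apply, mul_star_apply, Complex.aeval_ofReal, dist_eq_norm,
    ← Complex.ofReal_sub, Complex.norm_real, Real.norm_eq_abs]
  simp only [q, Polynomial.eval_sub, Polynomial.eval_C]
  rw [abs_le]
  constructor <;> linarith [abs_lt.1 h0, abs_lt.1 hx]

end IsIdealLmc

lemma isZeroSet_eset {f : S →ᵇ ℂ} (hf : f ∈ Lmc S) {ε : ℝ} (hε : 0 < ε) :
    IsZeroSet (Eset ε f) := by
  refine ⟨compNorm (fun t => max (t - ε) 0) (by fun_prop) f,
    isIdealLmc_lmc.compNorm_mem Lmc.isClosed hf _ (by simp [hε.le]), ?_⟩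
  ext x
  simp [Eset, compNorm_apply]

lemma IsZeroSet.inter {A B : Set S} (hA : IsZeroSet A) (hB : IsZeroSet B) : IsZeroSet (A ∩ B) := by
  obtain ⟨f, hf, rfl⟩ := hA
  obtain ⟨g, hg, rfl⟩ := hB
  refine ⟨f * star f + g * star g,
    Lmc.add_mem (Lmc.mul_mem hf (Lmc.star_mem hf)) (Lmc.mul_mem hg (Lmc.star_mem hg)), ?_⟩
  ext x
  rw [Set.mem_ofPred_eq, ← norm_eq_zero, norm_mul_star_add_mul_star_apply,
    add_eq_zero_iff_of_nonneg (sq_nonneg _) (sq_nonneg _)]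
  simp

/-- The witness is `(1 + |g|) * min (|f|, ε)`: off the zero set of `g` we have `|f| > ε`. -/
lemma IsIdealLmc.exists_eset_eq_zeroSet {I : Set (S →ᵇ ℂ)} (hI : IsIdealLmc I)
    (hcl : IsClosed I) {f g : S →ᵇ ℂ} (hf : f ∈ I) (hg : g ∈ Lmc S) {ε : ℝ} (hε : 0 < ε)
    (hfg : Eset ε f ⊆ {x | g x = 0}) : ∃ k ∈ I, Eset ε k = {x | g x = 0} := by
  let absG := compNorm id continuous_id g
  let minF := compNorm (fun t => min t ε) (by fun_prop) f
  refine ⟨(1 + absG) * minF, hI.mul_mem _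
    (Lmc.add_mem Lmc.one_mem (isIdealLmc_lmc.compNorm_mem Lmc.isClosed hg _ rfl)) _
    (hI.compNorm_mem hcl hf _ (min_eq_left hε.le)), ?_⟩
  ext x
  have hk : ‖((1 + absG) * minF) x‖ = (1 + ‖g x‖) * min ‖f x‖ ε := by
    simp only [BoundedContinuousFunction.mul_apply, BoundedContinuousFunction.add_apply,
      BoundedContinuousFunction.coe_one, Pi.one_apply, absG, minF, compNorm_apply, id]
    rw [← Complex.ofReal_one, ← Complex.ofReal_add, ← Complex.ofReal_mul,
      Complex.norm_of_nonneg (by positivity)]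
  simp only [Eset, Set.mem_ofPred_eq, hk]
  constructor
  · intro hle
    by_contra hgx
    have hfx : ε < ‖f x‖ := not_le.1 fun h => hgx (hfg h)
    rw [min_eq_right hfx.le] at hle
    nlinarith [norm_pos_iff.2 hgx]
  · intro hgx
    rw [hgx, norm_zero, add_zero, one_mul]
    exact min_le_right _ _

lemma efam_mono {I J : Set (S →ᵇ ℂ)} (hIJ : I ⊆ J) : Efam I ⊆ Efam J := by
  rintro _ ⟨f, hf, ε, hε, rfl⟩
  exact ⟨f, hIJ hf, ε, hε, rfl⟩

lemma subset_einv {I : Set (S →ᵇ ℂ)} {𝒜 : Set (Set S)} (hI : I ⊆ Lmc S) (hI𝒜 : Efam I ⊆ 𝒜) :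
    I ⊆ Einv 𝒜 :=
  fun f hf => ⟨hI hf, fun ε hε => hI𝒜 ⟨f, hf, ε, hε, rfl⟩⟩

namespace IsMaximalIdealLmc

variable {M : Set (S →ᵇ ℂ)}

theorem isClosed (hM : IsMaximalIdealLmc M) : IsClosed M := by
  have hne : closure M ≠ Lmc S := by
    intro h
    have h1 : (1 : S →ᵇ ℂ) ∈ closure M := h ▸ Lmc.one_mem
    obtain ⟨m, hm, hdist⟩ := Metric.mem_closure_iff.1 h1 (1 / 2) (by norm_num)
    refine hM.2.1 (hM.1.eq_lmc_of_le_norm hm (by norm_num : (0 : ℝ) < 1 / 2) fun x => ?_)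
    have hx := (BoundedContinuousFunction.dist_coe_le_dist x).trans_lt hdist
    rw [BoundedContinuousFunction.coe_one, Pi.one_apply, dist_eq_norm] at hx
    linarith [norm_sub_norm_le (1 : ℂ) (m x), norm_one (α := ℂ)]
  rw [← hM.2.2 _ hM.1.closure hne subset_closure]
  exact isClosed_closure

lemma exists_add_mul_eq_one (hM : IsMaximalIdealLmc M) {f : S →ᵇ ℂ} (hf : f ∈ Lmc S)
    (hfM : f ∉ M) : ∃ m ∈ M, ∃ h ∈ Lmc S, m + f * h = 1 := by
  let J := {j | ∃ m ∈ M, ∃ h ∈ Lmc S, j = m + f * h}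
  have hJ : IsIdealLmc J := by
    refine ⟨?_, ⟨0, hM.1.zero_mem, 0, Lmc.zero_mem, by simp⟩, ?_, ?_⟩
    · rintro _ ⟨m, hm, h, hh, rfl⟩
      exact Lmc.add_mem (hM.1.subset_lmc hm) (Lmc.mul_mem hf hh)
    · rintro _ ⟨m, hm, h, hh, rfl⟩ _ ⟨m', hm', h', hh', rfl⟩
      exact ⟨m + m', hM.1.add_mem _ hm _ hm', h + h', Lmc.add_mem hh hh', by ring⟩
    · rintro k hk _ ⟨m, hm, h, hh, rfl⟩
      exact ⟨k * m, hM.1.mul_mem k hk m hm, k * h, Lmc.mul_mem hk hh, by ring⟩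
  have hMJ : M ⊆ J := fun m hm => ⟨m, hm, 0, Lmc.zero_mem, by simp⟩
  have hfJ : f ∈ J := ⟨0, hM.1.zero_mem, 1, Lmc.one_mem, by simp⟩
  have hJ_top : J = Lmc S := by
    by_contra hne
    exact hfM (hM.2.2 J hJ hne hMJ ▸ hfJ)
  obtain ⟨m, hm, h, hh, hone⟩ := (hJ_top ▸ Lmc.one_mem : (1 : S →ᵇ ℂ) ∈ J)
  exact ⟨m, hm, h, hh, hone.symm⟩

/-- Write `1 = m + f h` with `m ∈ M`. If `E_δ(f) = E_δ'(g)` with `g ∈ M` and `δ ‖h‖ ≤ 1/2`, then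
`|g|² + |m|² ∈ M` is bounded away from `0`: where `|g| ≤ δ'` we get `|f| ≤ δ`, hence `|m| ≥ 1/2`. -/
theorem einv_efam (hM : IsMaximalIdealLmc M) : Einv (Efam M) = M := by
  refine subset_antisymm (fun f ⟨hf, hfE⟩ => ?_) (subset_einv hM.1.subset_lmc subset_rfl)
  by_contra hfM
  obtain ⟨m, hm, h, -, hone⟩ := hM.exists_add_mul_eq_one hf hfM
  set δ : ℝ := (2 * (‖h‖ + 1))⁻¹
  have hδ : 0 < δ := by positivity
  have hδh : δ * (‖h‖ + 1) = 1 / 2 := by simp only [δ]; field_simp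
  obtain ⟨g, hg, δ', hδ', hfg⟩ := hfE δ hδ
  have hgm : g * star g + m * star m ∈ M :=
    hM.1.add_mem _ (hM.1.mul_star_mem hg) _ (hM.1.mul_star_mem hm)
  refine hM.2.1 (hM.1.eq_lmc_of_le_norm hgm
    (lt_min (pow_pos hδ' 2) (by norm_num : (0 : ℝ) < 1 / 4)) fun x => ?_)
  rw [norm_mul_star_add_mul_star_apply]
  by_cases hgx : ‖g x‖ ≤ δ'
  · have hfx : ‖f x‖ ≤ δ := (hfg.symm ▸ hgx : x ∈ Eset δ f)
    have hmx : m x = 1 - f x * h x := eq_sub_of_add_eq (by simpa using congrArg (· x) hone)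
    have hfh : ‖f x * h x‖ ≤ 1 / 2 := by
      rw [norm_mul, ← hδh]
      exact mul_le_mul hfx (by linarith [h.norm_coe_le_norm x]) (norm_nonneg _) hδ.le
    have hmx' : 1 / 2 ≤ ‖m x‖ := by
      linarith [hmx ▸ norm_sub_norm_le (1 : ℂ) (f x * h x), norm_one (α := ℂ)]
    nlinarith [min_le_right (δ' ^ 2) (1 / 4), sq_nonneg ‖g x‖]
  · nlinarith [min_le_left (δ' ^ 2) (1 / 4), sq_nonneg ‖m x‖]

end IsMaximalIdealLmc

theorem IsMaximalIdealLmc.isZFilter_efam {M : Set (S →ᵇ ℂ)} (hM : IsMaximalIdealLmc M) :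
    IsZFilter (Efam M) := by
  have superset_mem : ∀ A ∈ Efam M, ∀ B : Set S, IsZeroSet B → A ⊆ B → B ∈ Efam M := by
    rintro _ ⟨f, hf, ε, hε, rfl⟩ _ ⟨g, hg, rfl⟩ hfg
    obtain ⟨k, hk, hkg⟩ := hM.1.exists_eset_eq_zeroSet hM.isClosed hf hg hε hfg
    exact ⟨k, hk, ε, hε, hkg.symm⟩
  refine ⟨?_, ?_, ⟨0, hM.1.zero_mem, 1, one_pos, by ext; simp [Eset]⟩, ?_, superset_mem⟩
  · rintro _ ⟨f, hf, ε, hε, rfl⟩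
    exact isZeroSet_eset (hM.1.subset_lmc hf) hε
  · rintro ⟨f, hf, ε, hε, hfε⟩
    refine hM.2.1 (hM.1.eq_lmc_of_le_norm hf hε fun x => ?_)
    by_contra! hx
    exact (hfε.symm ▸ hx.le : x ∈ (∅ : Set S))
  · rintro _ ⟨f, hf, ε, hε, rfl⟩ _ ⟨g, hg, δ, hδ, rfl⟩
    refine superset_mem _ ⟨_, hM.1.add_mem _ (hM.1.mul_star_mem hf) _ (hM.1.mul_star_mem hg),
      _, lt_min (pow_pos hε 2) (pow_pos hδ 2), rfl⟩ _
      ((isZeroSet_eset (hM.1.subset_lmc hf) hε).inter (isZeroSet_eset (hM.1.subset_lmc hg) hδ))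
      fun x hx => ?_
    simp only [Eset, Set.mem_ofPred_eq, norm_mul_star_add_mul_star_apply, le_min_iff] at hx
    constructor <;> simp only [Eset, Set.mem_ofPred_eq] <;>
      nlinarith [sq_nonneg ‖f x‖, sq_nonneg ‖g x‖]

namespace IsZFilter

variable {𝒜 : Set (Set S)}

lemma eset_mem_of_subset (h𝒜 : IsZFilter 𝒜) {A : Set S} (hA : A ∈ 𝒜) {f : S →ᵇ ℂ}
    (hf : f ∈ Lmc S) {ε : ℝ} (hε : 0 < ε) (hAf : A ⊆ Eset ε f) : Eset ε f ∈ 𝒜 :=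
  h𝒜.superset_mem A hA _ (isZeroSet_eset hf hε) hAf

theorem isIdealLmc_einv (h𝒜 : IsZFilter 𝒜) : IsIdealLmc (Einv 𝒜) := by
  refine ⟨fun f hf => hf.1, ⟨Lmc.zero_mem, fun ε hε => ?_⟩, ?_, ?_⟩
  · convert h𝒜.univ_mem
    ext
    simp [Eset, hε.le]
  · rintro f ⟨hf, hfE⟩ g ⟨hg, hgE⟩
    refine ⟨Lmc.add_mem hf hg, fun ε hε => h𝒜.eset_mem_of_subset
      (h𝒜.inter_mem _ (hfE (ε / 2) (by positivity)) _ (hgE (ε / 2) (by positivity)))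
      (Lmc.add_mem hf hg) hε fun x ⟨hfx, hgx⟩ => ?_⟩
    simp only [Eset, Set.mem_ofPred_eq, BoundedContinuousFunction.add_apply] at hfx hgx ⊢
    linarith [norm_add_le (f x) (g x)]
  · rintro f hf g ⟨hg, hgE⟩
    refine ⟨Lmc.mul_mem hf hg, fun ε hε => h𝒜.eset_mem_of_subset
      (hgE (ε / (‖f‖ + 1)) (by positivity)) (Lmc.mul_mem hf hg) hε fun x hgx => ?_⟩
    simp only [Eset, Set.mem_ofPred_eq, BoundedContinuousFunction.mul_apply, norm_mul] at hgx ⊢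
    calc ‖f x‖ * ‖g x‖ ≤ (‖f‖ + 1) * (ε / (‖f‖ + 1)) := by
          gcongr
          linarith [f.norm_coe_le_norm x]
      _ = ε := by field_simp

theorem einv_ne_lmc (h𝒜 : IsZFilter 𝒜) : Einv 𝒜 ≠ Lmc S := by
  intro h
  obtain ⟨-, h1⟩ : (1 : S →ᵇ ℂ) ∈ Einv 𝒜 := h ▸ Lmc.one_mem
  refine h𝒜.not_empty_mem ?_
  convert h1 (1 / 2) (by norm_num)
  ext
  simp [Eset]
  norm_num

end IsZFilter

lemma IsIdealLmc.sUnion {c : Set (Set (S →ᵇ ℂ))} (hc : ∀ J ∈ c, IsIdealLmc J)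
    (hchain : IsChain (· ⊆ ·) c) (hne : c.Nonempty) : IsIdealLmc (⋃₀ c) := by
  obtain ⟨J₀, hJ₀⟩ := hne
  refine ⟨?_, ⟨J₀, hJ₀, (hc J₀ hJ₀).zero_mem⟩, ?_, ?_⟩
  · rintro f ⟨J, hJ, hf⟩
    exact (hc J hJ).subset_lmc hf
  · rintro f ⟨J₁, hJ₁, hf⟩ g ⟨J₂, hJ₂, hg⟩
    rcases hchain.total hJ₁ hJ₂ with h | h
    · exact ⟨J₂, hJ₂, (hc J₂ hJ₂).add_mem f (h hf) g hg⟩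
    · exact ⟨J₁, hJ₁, (hc J₁ hJ₁).add_mem f hf g (h hg)⟩
  · rintro f hf g ⟨J, hJ, hg⟩
    exact ⟨J, hJ, (hc J hJ).mul_mem f hf g hg⟩

theorem IsIdealLmc.exists_maximal {I : Set (S →ᵇ ℂ)} (hI : IsIdealLmc I) (hne : I ≠ Lmc S) :
    ∃ M, I ⊆ M ∧ IsMaximalIdealLmc M := by
  have one_notMem : ∀ {J}, IsIdealLmc J → J ≠ Lmc S → (1 : S →ᵇ ℂ) ∉ J :=
    fun hJ hne h1 => hne (hJ.eq_lmc_of_one_mem h1)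
  obtain ⟨M, hIM, ⟨hM, hM1⟩, hmax⟩ := zorn_subset_nonempty {J | IsIdealLmc J ∧ (1 : S →ᵇ ℂ) ∉ J}
    (fun c hc hchain hne => ⟨⋃₀ c, ⟨.sUnion (fun J hJ => (hc hJ).1) hchain hne,
      fun ⟨J, hJ, h1⟩ => (hc hJ).2 h1⟩, fun _ => Set.subset_sUnion_of_mem⟩)
    I ⟨hI, one_notMem hI hne⟩
  refine ⟨M, hIM, hM, fun h => hM1 (h ▸ Lmc.one_mem), fun J hJ hJne hMJ => ?_⟩
  exact (hmax ⟨hJ, one_notMem hJ hJne⟩ hMJ).antisymm hMJ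

theorem IsMaximalIdealLmc.isEUltrafilter_efam {M : Set (S →ᵇ ℂ)} (hM : IsMaximalIdealLmc M) :
    IsEUltrafilter (Efam M) := by
  refine ⟨⟨hM.isZFilter_efam, by rw [hM.einv_efam]⟩, fun 𝒜 h𝒜 hM𝒜 => ?_⟩
  rw [← h𝒜.2,
    hM.2.2 _ h𝒜.1.isIdealLmc_einv h𝒜.1.einv_ne_lmc (subset_einv hM.1.subset_lmc hM𝒜)]

theorem IsEUltrafilter.isMaximalIdealLmc_einv {𝒜 : Set (Set S)} (h𝒜 : IsEUltrafilter 𝒜) :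
    IsMaximalIdealLmc (Einv 𝒜) := by
  refine ⟨h𝒜.1.1.isIdealLmc_einv, h𝒜.1.1.einv_ne_lmc, fun J hJ hJne h𝒜J => ?_⟩
  obtain ⟨M, hJM, hM⟩ := hJ.exists_maximal hJne
  have h𝒜M : 𝒜 ⊆ Efam M := h𝒜.1.2 ▸ efam_mono (h𝒜J.trans hJM)
  have hM𝒜 : M = Einv 𝒜 := by rw [← h𝒜.2 _ hM.isEUltrafilter_efam.1 h𝒜M, hM.einv_efam]
  exact (hM𝒜 ▸ hJM).antisymm h𝒜J

end

theorem stmt14_general {S : Type*} [TopologicalSpace S] [Semigroup S]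
    [SemitopologicalSemigroup S] :
    (∀ M : Set (S →ᵇ ℂ), IsMaximalIdealLmc M → IsEUltrafilter (Efam M)) ∧
    (∀ 𝒜 : Set (Set S), IsEUltrafilter 𝒜 → IsMaximalIdealLmc (Einv 𝒜)) ∧
    Set.BijOn (Efam : Set (S →ᵇ ℂ) → Set (Set S))
      {M | IsMaximalIdealLmc M} {𝒜 | IsEUltrafilter 𝒜} := by
  refine ⟨fun M hM => hM.isEUltrafilter_efam, fun 𝒜 h𝒜 => h𝒜.isMaximalIdealLmc_einv,
    fun M hM => hM.isEUltrafilter_efam, fun M₁ hM₁ M₂ hM₂ h => ?_,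
    fun 𝒜 h𝒜 => ⟨Einv 𝒜, h𝒜.isMaximalIdealLmc_einv, h𝒜.1.2⟩⟩
  rw [← IsMaximalIdealLmc.einv_efam hM₁, ← IsMaximalIdealLmc.einv_efam hM₂, h]

theorem stmt14 {S : Type*} [TopologicalSpace S] [T2Space S] [Semigroup S]
    [SemitopologicalSemigroup S] :
    (∀ M : Set (S →ᵇ ℂ), IsMaximalIdealLmc M → IsEUltrafilter (Efam M)) ∧
    (∀ 𝒜 : Set (Set S), IsEUltrafilter 𝒜 → IsMaximalIdealLmc (Einv 𝒜)) ∧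
    Set.BijOn (Efam : Set (S →ᵇ ℂ) → Set (Set S))
      {M | IsMaximalIdealLmc M} {𝒜 | IsEUltrafilter 𝒜} :=
  stmt14_general
end

section
/- An ideal M of Lmc(S) is maximal if and only if it has the property: for every f ∈ Lmc(S), if E_ε(f) meets every member of E(M) for each ε > 0, then f ∈ M. -/
open scoped BoundedContinuousFunction
open WeakDual

section Stmt15Aux

variable {S : Type*} [TopologicalSpace S] [Mul S] [SemitopologicalSemigroup S]

lemma lTrans_apply' (s : S) (f : S →ᵇ ℂ) (x : S) : lTrans s f x = f (s * x) := rfl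

lemma lTrans_add' (s : S) (f g : S →ᵇ ℂ) : lTrans s (f + g) = lTrans s f + lTrans s g := by
  ext x; simp [lTrans_apply']

lemma lTrans_mul' (s : S) (f g : S →ᵇ ℂ) : lTrans s (f * g) = lTrans s f * lTrans s g := by
  ext x; simp [lTrans_apply']

lemma lTrans_star' (s : S) (f : S →ᵇ ℂ) : lTrans s (star f) = star (lTrans s f) := by
  ext x; rfl

lemma lTrans_one' (s : S) : lTrans s (1 : S →ᵇ ℂ) = 1 := by
  ext x; rfl

lemma one_mem_Lmc : (1 : S →ᵇ ℂ) ∈ Lmc S := fun μ => by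
  simp only [lTrans_one']; exact continuous_const

lemma zero_mem_Lmc : (0 : S →ᵇ ℂ) ∈ Lmc S := fun μ => by
  have : ∀ s : S, lTrans s (0 : S →ᵇ ℂ) = 0 := fun s => by ext x; rfl
  simp only [this, map_zero]; exact continuous_const

lemma add_mem_Lmc {f g : S →ᵇ ℂ} (hf : f ∈ Lmc S) (hg : g ∈ Lmc S) : f + g ∈ Lmc S := fun μ => by
  simp only [lTrans_add', map_add]; exact (hf μ).add (hg μ)

lemma mul_mem_Lmc {f g : S →ᵇ ℂ} (hf : f ∈ Lmc S) (hg : g ∈ Lmc S) : f * g ∈ Lmc S := fun μ => by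
  simp only [lTrans_mul', map_mul]; exact (hf μ).mul (hg μ)

lemma star_mem_Lmc {f : S →ᵇ ℂ} (hf : f ∈ Lmc S) : star f ∈ Lmc S := fun μ => by
  simp only [lTrans_star', map_star]; exact continuous_star.comp (hf μ)

/-- A function in `Lmc S` bounded below in modulus is invertible in `Lmc S`. -/
lemma inv_mem_Lmc {f : S →ᵇ ℂ} (hf : f ∈ Lmc S) {γ : ℝ} (hγ : 0 < γ)
    (hb : ∀ x, γ ≤ ‖f x‖) : ∃ g ∈ Lmc S, g * f = 1 := by
  have hne : ∀ x, f x ≠ 0 := by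
    intro x hx
    have := hb x
    rw [hx, norm_zero] at this
    linarith
  set g : S →ᵇ ℂ := BoundedContinuousFunction.ofNormedAddCommGroup
    (fun x => (f x)⁻¹) (f.continuous.inv₀ hne) γ⁻¹
    (fun x => by
      rw [norm_inv]
      exact inv_anti₀ hγ (hb x)) with hg
  have hgx : ∀ x, g x = (f x)⁻¹ := fun x => rfl
  have hgf : g * f = 1 := by
    ext x
    simp only [BoundedContinuousFunction.coe_mul, Pi.mul_apply, hgx,
      BoundedContinuousFunction.coe_one, Pi.one_apply]
    exact inv_mul_cancel₀ (hne x)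
  refine ⟨g, fun μ => ?_, hgf⟩
  have hprod : ∀ s : S, μ (lTrans s g) * μ (lTrans s f) = 1 := fun s => by
    rw [← map_mul, ← lTrans_mul', hgf, lTrans_one', map_one]
  have hne' : ∀ s : S, (μ (lTrans s f) : ℂ) ≠ 0 := fun s hz => by
    have := hprod s
    rw [hz, mul_zero] at this
    exact one_ne_zero (α := ℂ) this.symm
  have key : (fun s : S => (μ (lTrans s g) : ℂ)) = fun s => (μ (lTrans s f) : ℂ)⁻¹ :=
    funext fun s => eq_inv_of_mul_eq_one_left (hprod s)
  rw [key]
  exact (hf μ).inv₀ hne'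

end Stmt15Aux

theorem stmt15 {S : Type*} [TopologicalSpace S] [T2Space S] [Semigroup S]
    [SemitopologicalSemigroup S] (M : Set (S →ᵇ ℂ)) (hM : IsIdealLmc M)
    (hproper : M ≠ Lmc S) :
    IsMaximalIdealLmc M ↔
      ∀ f ∈ Lmc S,
        (∀ ε : ℝ, 0 < ε → ∀ B ∈ Efam M, (Eset ε f ∩ B).Nonempty) → f ∈ M := by
  constructor
  · rintro ⟨-, -, hmax⟩ f hfL hmeet
    set J : Set (S →ᵇ ℂ) := {h | ∃ m ∈ M, ∃ g ∈ Lmc S, h = m + g * f} with hJdef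
    have hJideal : IsIdealLmc J := by
      constructor
      · rintro h ⟨m, hm, g, hg, rfl⟩
        exact add_mem_Lmc (hM.subset_lmc hm) (mul_mem_Lmc hg hfL)
      · exact ⟨0, hM.zero_mem, 0, zero_mem_Lmc, by simp⟩
      · rintro h1 ⟨m1, hm1, g1, hg1, rfl⟩ h2 ⟨m2, hm2, g2, hg2, rfl⟩
        exact ⟨m1 + m2, hM.add_mem _ hm1 _ hm2, g1 + g2, add_mem_Lmc hg1 hg2, by ring⟩
      · rintro h hh k ⟨m, hm, g, hg, rfl⟩
        exact ⟨h * m, hM.mul_mem _ hh _ hm, h * g, mul_mem_Lmc hh hg, by ring⟩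
    have hMJ : M ⊆ J := fun m hm =>
      ⟨m, hm, 0, zero_mem_Lmc, by rw [zero_mul, add_zero]⟩
    have hJne : J ≠ Lmc S := by
      intro hEq
      have h1J : (1 : S →ᵇ ℂ) ∈ J := hEq ▸ one_mem_Lmc
      obtain ⟨m, hm, g, hg, h1⟩ := h1J
      have hε : (0 : ℝ) < 1 / (4 * (‖g‖ + 1)) := by positivity
      have hB : Eset (1/4 : ℝ) m ∈ Efam M := ⟨m, hm, 1/4, by norm_num, rfl⟩
      obtain ⟨x, hxf, hxm⟩ := hmeet _ hε _ hB
      have hxf' : ‖f x‖ ≤ 1 / (4 * (‖g‖ + 1)) := hxf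
      have hxm' : ‖m x‖ ≤ 1/4 := hxm
      have hval : (1 : ℂ) = m x + g x * f x := by
        have := congrArg (fun k : S →ᵇ ℂ => k x) h1
        simpa using this
      have h1le : (1 : ℝ) ≤ ‖m x‖ + ‖g x‖ * ‖f x‖ := by
        calc (1 : ℝ) = ‖(1 : ℂ)‖ := by simp
          _ = ‖m x + g x * f x‖ := by rw [← hval]
          _ ≤ ‖m x‖ + ‖g x * f x‖ := norm_add_le _ _
          _ = ‖m x‖ + ‖g x‖ * ‖f x‖ := by rw [norm_mul]
      have hgx : ‖g x‖ ≤ ‖g‖ := g.norm_coe_le_norm x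
      have hgpos : (0 : ℝ) ≤ ‖g‖ + 1 := by positivity
      have : ‖g x‖ * ‖f x‖ ≤ (‖g‖ + 1) * (1 / (4 * (‖g‖ + 1))) := by
        apply mul_le_mul (by linarith) hxf' (norm_nonneg _) hgpos
      have hne0 : (‖g‖ + 1) ≠ 0 := by positivity
      rw [mul_one_div, mul_comm, mul_comm 4 (‖g‖+1), ← div_div,
        div_self hne0] at this
      linarith
    have hJM : J = M := hmax J hJideal hJne hMJ
    have : f ∈ J := ⟨0, hM.zero_mem, 1, one_mem_Lmc, by rw [one_mul, zero_add]⟩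
    rwa [hJM] at this
  · intro hP
    refine ⟨hM, hproper, fun J hJ hJne hMJ => ?_⟩
    refine Set.Subset.antisymm (fun f hfJ => ?_) hMJ
    have hfL := hJ.subset_lmc hfJ
    apply hP f hfL
    intro ε hε B hB
    obtain ⟨g, hgM, δ, hδ, rfl⟩ := hB
    by_contra hempty
    rw [Set.not_nonempty_iff_eq_empty] at hempty
    have hgL := hM.subset_lmc hgM
    set h : S →ᵇ ℂ := star f * f + star g * g with hh
    have hhL : h ∈ Lmc S :=
      add_mem_Lmc (mul_mem_Lmc (star_mem_Lmc hfL) hfL) (mul_mem_Lmc (star_mem_Lmc hgL) hgL)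
    have hhJ : h ∈ J :=
      hJ.add_mem _ (hJ.mul_mem _ (star_mem_Lmc hfL) _ hfJ) _
        (hJ.mul_mem _ (star_mem_Lmc hgL) _ (hMJ hgM))
    set γ : ℝ := min (ε^2) (δ^2) with hγdef
    have hγ : 0 < γ := lt_min (by positivity) (by positivity)
    have hbound : ∀ x, γ ≤ ‖h x‖ := by
      intro x
      have hx : x ∉ Eset ε f ∩ Eset δ g := by
        rw [hempty]; exact Set.notMem_empty x
      have hval : h x = ((‖f x‖^2 + ‖g x‖^2 : ℝ) : ℂ) := by
        have h1 : star (f x) * f x = ((‖f x‖^2 : ℝ) : ℂ) := by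
          rw [RCLike.star_def, RCLike.conj_mul]; norm_cast
        have h2 : star (g x) * g x = ((‖g x‖^2 : ℝ) : ℂ) := by
          rw [RCLike.star_def, RCLike.conj_mul]; norm_cast
        simp only [hh, BoundedContinuousFunction.coe_add, Pi.add_apply,
          BoundedContinuousFunction.coe_mul, Pi.mul_apply,
          BoundedContinuousFunction.coe_star, Pi.star_apply, h1, h2]
        push_cast
        ring
      have hnorm : ‖h x‖ = ‖f x‖^2 + ‖g x‖^2 := by
        rw [hval, Complex.norm_real, Real.norm_of_nonneg (by positivity)]
      rw [hnorm]
      rcases not_and_or.mp (fun hc => hx ⟨hc.1, hc.2⟩) with hc | hc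
      · have : ε < ‖f x‖ := lt_of_not_ge hc
        have h2 : ε^2 ≤ ‖f x‖^2 := by nlinarith [hε.le]
        have := min_le_left (ε^2) (δ^2)
        nlinarith [sq_nonneg ‖g x‖]
      · have : δ < ‖g x‖ := lt_of_not_ge hc
        have h2 : δ^2 ≤ ‖g x‖^2 := by nlinarith [hδ.le]
        have := min_le_right (ε^2) (δ^2)
        nlinarith [sq_nonneg ‖f x‖]
    obtain ⟨k, hkL, hkh⟩ := inv_mem_Lmc hhL hγ hbound
    have h1J : (1 : S →ᵇ ℂ) ∈ J := hkh ▸ hJ.mul_mem _ hkL _ hhJ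
    apply hJne
    refine Set.Subset.antisymm hJ.subset_lmc (fun p hp => ?_)
    have := hJ.mul_mem _ hp _ h1J
    rwa [mul_one] at this
end
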